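/- arXiv:1705.06840 — 4 statements merged into one kernel-verified Lean document; each statement's English description precedes it below -/
import Mathlib

section
/- Let u : Fin Δ → ℝ be a strictly decreasing utility function on ranks, and let m be the total number of objects. If for every pair of ranks i < j we have u(i) > m · u(j) (with all utilities positive), then for any two multisets S and T of ranks each of size at most m, S precedes T in the lexicographic order on signature vectors (counting, from the best rank down, the number of objects at each rank) if and only if the total additive utility of S exceeds the total utility of T. -/
private lemma tail_sum_lt {Δ m : ℕ} {u : Fin Δ → ℝ}
    (hpos : ∀ i, 0 < u i)
    (hgap : ∀ i j : Fin Δ, i < j → (m : ℝ) * u j < u i)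
    (l : Fin Δ) (W : Multiset (Fin Δ)) (hmem : ∀ w ∈ W, l < w)
    (hcard : Multiset.card W ≤ m) : (W.map u).sum < u l := by
  rcases eq_or_ne W 0 with rfl | hW
  · simpa using hpos l
  · have hWpos : 0 < Multiset.card W := Multiset.card_pos.2 hW
    have hm : 0 < m := lt_of_lt_of_le hWpos hcard
    have hmR : (0 : ℝ) < m := by exact_mod_cast hm
    have h2 : (W.map u).sum < (W.map (fun _ => u l / m)).sum := by
      apply Multiset.sum_lt_sum_of_nonempty hW
      intro i hi
      rw [lt_div_iff₀ hmR, mul_comm]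
      exact hgap l i (hmem i hi)
    have h2' : (W.map (fun _ => u l / m)).sum = (Multiset.card W : ℝ) * (u l / m) := by
      rw [Multiset.map_const', Multiset.sum_replicate, nsmul_eq_mul]
    have h3 : ((Multiset.card W) : ℝ) * (u l / m) ≤ m * (u l / m) := by
      apply mul_le_mul_of_nonneg_right
      · exact_mod_cast hcard
      · exact div_nonneg (hpos l).le hmR.le
    have h4 : (m : ℝ) * (u l / m) = u l := by field_simp
    calc (W.map u).sum < (W.map (fun _ => u l / m)).sum := h2
      _ = ((Multiset.card W) : ℝ) * (u l / m) := h2'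
      _ ≤ m * (u l / m) := h3
      _ = u l := h4

private lemma forward_dir {Δ m : ℕ} {u : Fin Δ → ℝ}
    (hpos : ∀ i, 0 < u i)
    (hgap : ∀ i j : Fin Δ, i < j → (m : ℝ) * u j < u i)
    (S T : Multiset (Fin Δ)) (hT : Multiset.card T ≤ m)
    (l : Fin Δ) (h1 : T.count l < S.count l)
    (h2 : ∀ k, k < l → S.count k = T.count k) :
    (T.map u).sum < (S.map u).sum := by
  -- decompose each multiset into three parts
  have decomp : ∀ X : Multiset (Fin Δ),
      X = X.filter (· < l) + (Multiset.replicate (X.count l) l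
        + (X.filter (fun k => ¬ k < l)).filter (fun a => ¬ a = l)) := by
    intro X
    have e3 : (X.filter (fun k => ¬ k < l)).filter (· = l)
        = Multiset.replicate (X.count l) l := by
      rw [Multiset.filter_eq']
      congr 1
      rw [Multiset.count_filter]
      simp
    have e2 : X.filter (fun k => ¬ k < l) = Multiset.replicate (X.count l) l
        + (X.filter (fun k => ¬ k < l)).filter (fun a => ¬ a = l) := by
      conv_lhs => rw [← Multiset.filter_add_not (· = l) (X.filter (fun k => ¬ k < l))]
      rw [e3]
    conv_lhs => rw [← Multiset.filter_add_not (· < l) X, e2]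
  have hA : S.filter (· < l) = T.filter (· < l) := by
    ext k
    by_cases hk : k < l
    · simp [Multiset.count_filter, hk, h2 k hk]
    · simp [Multiset.count_filter, hk]
  set CS := (S.filter (fun k => ¬ k < l)).filter (fun a => ¬ a = l) with hCS
  set CT := (T.filter (fun k => ¬ k < l)).filter (fun a => ¬ a = l) with hCT
  have hCTmem : ∀ w ∈ CT, l < w := by
    intro w hw
    rw [hCT, Multiset.mem_filter, Multiset.mem_filter] at hw
    obtain ⟨⟨_, hwl⟩, hne⟩ := hw
    exact lt_of_le_of_ne (not_lt.1 hwl) (fun h => hne h.symm)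
  have hCTcard : Multiset.card CT ≤ m := by
    refine le_trans ?_ hT
    refine le_trans (Multiset.card_le_card (Multiset.filter_le _ _)) ?_
    exact Multiset.card_le_card (Multiset.filter_le _ _)
  have hCTsum : (CT.map u).sum < u l := tail_sum_lt hpos hgap l CT hCTmem hCTcard
  have hCSsum : (0 : ℝ) ≤ (CS.map u).sum := by
    apply Multiset.sum_nonneg
    intro x hx
    obtain ⟨w, _, rfl⟩ := Multiset.mem_map.1 hx
    exact (hpos w).le
  have sum_eq : ∀ X : Multiset (Fin Δ),
      (X.map u).sum = ((X.filter (· < l)).map u).sum + ((X.count l : ℝ) * u l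
        + (((X.filter (fun k => ¬ k < l)).filter (fun a => ¬ a = l)).map u).sum) := by
    intro X
    conv_lhs => rw [decomp X]
    rw [Multiset.map_add, Multiset.map_add, Multiset.sum_add, Multiset.sum_add]
    congr 2
    rw [Multiset.map_replicate, Multiset.sum_replicate, nsmul_eq_mul]
  rw [sum_eq S, sum_eq T, ← hCS, ← hCT, hA]
  have hcount : (T.count l : ℝ) + 1 ≤ (S.count l : ℝ) := by exact_mod_cast h1
  have hul := hpos l
  nlinarith [hul, hCTsum, hCSsum, hcount]

/-- Lexicographic preference on signature vectors coincides with additive utility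
when utilities are strictly decreasing with geometric-style gaps `u i > m * u j`. -/
theorem lex_iff_additive_utility (Δ m : ℕ) (u : Fin Δ → ℝ)
    (hpos : ∀ i, 0 < u i) (hdec : StrictAnti u)
    (hgap : ∀ i j : Fin Δ, i < j → (m : ℝ) * u j < u i)
    (S T : Multiset (Fin Δ)) (hS : Multiset.card S ≤ m) (hT : Multiset.card T ≤ m) :
    ((∃ l : Fin Δ, T.count l < S.count l ∧ ∀ k, k < l → S.count k = T.count k)
      ↔ (T.map u).sum < (S.map u).sum) := by
  constructor
  · rintro ⟨l, h1, h2⟩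
    exact forward_dir hpos hgap S T hT l h1 h2
  · intro hsum
    by_cases hST : S = T
    · subst hST; exact absurd hsum (lt_irrefl _)
    · have hdiff : ∃ l, S.count l ≠ T.count l := by
        by_contra h
        push_neg at h
        exact hST (Multiset.ext.2 h)
      obtain ⟨l0, hl0⟩ := hdiff
      set F := Finset.univ.filter (fun l => S.count l ≠ T.count l) with hF
      have hFne : F.Nonempty := ⟨l0, by simp [hF, hl0]⟩
      set l := F.min' hFne with hl
      have hlF : l ∈ F := F.min'_mem hFne
      have hlne : S.count l ≠ T.count l := by
        simpa [hF] using hlF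
      have hmin : ∀ k, k < l → S.count k = T.count k := by
        intro k hk
        by_contra hne
        have : k ∈ F := by simp [hF, hne]
        exact absurd (F.min'_le k this) (not_le.2 hk)
      rcases lt_or_gt_of_ne hlne with h | h
      · -- S.count l < T.count l : then T's sum is bigger, contradiction
        have := forward_dir hpos hgap T S hS l h (fun k hk => (hmin k hk).symm)
        exact absurd hsum (not_lt.2 this.le)
      · exact ⟨l, h, hmin⟩
end

section
/- Any Σ-OWA maximal assignment is Pareto optimal with respect to pairwise comparisons: if A maximizes ∑_{i∈N} OWA_α(ω_i(A)) over all feasible assignments, then there is no feasible assignment A' such that every agent weakly prefers A'(i) to A(i) with respect to pairwise comparisons (with equal allocation sizes) and at least one agent's OWA value strictly increases. -/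
/-!
A replacement of one item by a weakly better one can only raise every entry of the
non-increasingly sorted utility vector: inserting a larger value into a sorted list dominates the
result pointwise. With nonnegative weights the OWA value therefore weakly rises along every chain
of such replacements, so an assignment `A'` as in the statement would have a strictly larger
Σ-OWA value than `A`, contradicting maximality.
-/

noncomputable def sortDesc {K : ℕ} (x : Fin K → ℝ) : Fin K → ℝ :=
  x ∘ Tuple.sort (fun i => -x i)

noncomputable def owa {K : ℕ} (α x : Fin K → ℝ) : ℝ :=
  ∑ i, α i * sortDesc x i

noncomputable def owaVal (K : ℕ) (α : Fin K → ℝ) (vals : Multiset ℝ) : ℝ :=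
  ∑ j : Fin K, α j * ((Multiset.sort vals (· ≤ ·)).reverse.getD j 0)

namespace List

variable {α : Type*} [LinearOrder α]

theorem orderedInsert_ge_eq_cons {c : α} {L : List α} (hL : (c :: L).Pairwise (· ≥ ·)) :
    L.orderedInsert (· ≥ ·) c = c :: L := by
  cases L with
  | nil => rfl
  | cons d L => exact orderedInsert_cons_of_le _ _ (rel_of_pairwise_cons hL mem_cons_self)

theorem orderedInsert_ge_getD_mono {L : List α} (hL : L.Pairwise (· ≥ ·)) {a b : α}
    (hab : a ≤ b) (d : α) (k : ℕ) :
    (L.orderedInsert (· ≥ ·) a).getD k d ≤ (L.orderedInsert (· ≥ ·) b).getD k d := by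
  induction L generalizing a b k with
  | nil => cases k <;> simp [hab]
  | cons c L ih =>
    have hcL := pairwise_cons.mp hL
    by_cases hbc : c ≤ b
    · by_cases hac : c ≤ a
      · cases k <;> simp [hac, hbc, hab]
      · cases k with
        | zero => simp [hac, hbc]
        | succ k =>
          simpa [hac, hbc, orderedInsert_ge_eq_cons hL] using ih hcL.2 (le_of_not_ge hac) k
    · have hac : ¬ c ≤ a := fun h => hbc (h.trans hab)
      cases k with
      | zero => simp [hac, hbc]
      | succ k => simpa [hac, hbc] using ih hcL.2 hab k

end List

namespace Multiset

theorem sort_cons_eq_orderedInsert {α : Type*} (r : α → α → Prop) [DecidableRel r] [IsTrans α r]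
    [Std.Antisymm r] [Std.Total r] (a : α) (s : Multiset α) :
    sort (a ::ₘ s) r = (sort s r).orderedInsert r a :=
  Quot.inductionOn s fun l => by simp [List.mergeSort_eq_insertionSort]

theorem reverse_sort_le {α : Type*} [LinearOrder α] (s : Multiset α) :
    (sort s (· ≤ ·)).reverse = sort s (· ≥ ·) := by
  refine List.Perm.eq_of_pairwise' (r := (· ≥ ·)) ?_ (pairwise_sort s _) ?_
  · exact List.pairwise_reverse.mpr (pairwise_sort s _)
  · rw [← coe_eq_coe, coe_reverse, sort_eq, sort_eq]

end Multiset

theorem owaVal_cons_mono {K : ℕ} {α : Fin K → ℝ} (hα : ∀ j, 0 ≤ α j) {a b : ℝ} (hab : a ≤ b)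
    (m : Multiset ℝ) : owaVal K α (a ::ₘ m) ≤ owaVal K α (b ::ₘ m) := by
  refine Finset.sum_le_sum fun j _ => mul_le_mul_of_nonneg_left ?_ (hα j)
  rw [Multiset.reverse_sort_le, Multiset.reverse_sort_le, Multiset.sort_cons_eq_orderedInsert,
    Multiset.sort_cons_eq_orderedInsert]
  exact List.orderedInsert_ge_getD_mono (Multiset.pairwise_sort m _) hab 0 j

theorem owaVal_map_le_insert_erase {K : ℕ} {α : Fin K → ℝ} (hα : ∀ j, 0 ≤ α j) {O : Type*}
    [DecidableEq O] {u : O → ℝ} {T : Finset O} {o o' : O} (ho : o ∈ T) (ho' : o' ∉ T)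
    (hu : u o ≤ u o') :
    owaVal K α (T.val.map u) ≤ owaVal K α ((insert o' (T.erase o)).val.map u) := by
  rw [Finset.insert_val_of_notMem (by simp [ho']), Finset.erase_val, Multiset.map_cons]
  conv_lhs => rw [← Multiset.cons_erase ho, Multiset.map_cons]
  exact owaVal_cons_mono hα hu _

theorem sigma_owa_pareto_optimal_general {N O : Type*} [Fintype N] [DecidableEq O]
    (u : N → O → ℝ) (K : ℕ) (α : Fin K → ℝ) (hα : ∀ j, 0 ≤ α j)
    (Feasible : (N → Finset O) → Prop)
    (step : N → Finset O → Finset O → Prop)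
    (hstep : ∀ (i : N) (S T : Finset O), step i S T ↔
      ∃ o ∈ T, ∃ o', o' ∉ T ∧ u i o ≤ u i o' ∧ S = insert o' (T.erase o))
    (A : N → Finset O)
    (hmax : ∀ B, Feasible B →
      ∑ i, owaVal K α ((B i).val.map (u i)) ≤ ∑ i, owaVal K α ((A i).val.map (u i))) :
    ¬ ∃ A', Feasible A' ∧ (∀ i, Relation.ReflTransGen (step i) (A' i) (A i)) ∧
      ∃ i, owaVal K α ((A i).val.map (u i)) < owaVal K α ((A' i).val.map (u i)) := by
  rintro ⟨A', hA', hpref, i₀, hi₀⟩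
  have owaVal_le_of_step (i : N) (S T : Finset O) (h : step i S T) :
      owaVal K α (S.val.map (u i)) ≥ owaVal K α (T.val.map (u i)) := by
    obtain ⟨o, ho, o', ho', hu, rfl⟩ := (hstep i S T).1 h
    exact owaVal_map_le_insert_erase hα ho ho' hu
  have hmono (i : N) : owaVal K α ((A i).val.map (u i)) ≤ owaVal K α ((A' i).val.map (u i)) := by
    simpa [Relation.reflTransGen_eq_self] using
      (hpref i).lift (p := (· ≥ ·)) (fun S => owaVal K α (S.val.map (u i))) (owaVal_le_of_step i)
  exact (hmax A' hA').not_gt (Finset.sum_lt_sum (fun i _ => hmono i) ⟨i₀, Finset.mem_univ _, hi₀⟩)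

/-- A Σ-OWA maximal assignment is Pareto optimal with respect to pairwise comparisons. -/
theorem sigma_owa_pareto_optimal {N O : Type*} [Fintype N] [DecidableEq O]
    (u : N → O → ℝ) (K : ℕ) (α : Fin K → ℝ) (hα : ∀ j, 0 ≤ α j)
    (Feasible : (N → Finset O) → Prop)
    (step : N → Finset O → Finset O → Prop)
    (hstep : ∀ (i : N) (S T : Finset O), step i S T ↔
      ∃ o ∈ T, ∃ o', o' ∉ T ∧ u i o ≤ u i o' ∧ S = insert o' (T.erase o))
    (A : N → Finset O) (hA : Feasible A)
    (hmax : ∀ B, Feasible B →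
      ∑ i, owaVal K α ((B i).val.map (u i)) ≤ ∑ i, owaVal K α ((A i).val.map (u i))) :
    ¬ ∃ A', Feasible A' ∧ (∀ i, Relation.ReflTransGen (step i) (A' i) (A i)) ∧
      ∃ i, owaVal K α ((A i).val.map (u i)) < owaVal K α ((A' i).val.map (u i)) :=
  sigma_owa_pareto_optimal_general u K α hα Feasible step hstep A hmax
end

section
/- If α is non-increasing and nonnegative and x has nonnegative entries, then OWA_α is monotone under adding items: for any vector x of length k < K (padded with zeros to length K) and any value v ≥ 0, OWA_α of x with v appended (padded to length K) is at least OWA_α of x padded to length K. -/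
/-!
Sorting in decreasing order, the list for `v ::ₘ vals` is the list for `vals` with `v` inserted
at its place. Insertion shifts the smaller entries one step to the right, so no position of the
zero-padded list decreases (the padding value `0` is below every entry); with nonnegative weights
the weighted sums compare the same way.
-/

namespace List

variable {α : Type*} [LinearOrder α] {l : List α} {d : α}

theorem Pairwise.getD_succ_le (hl : l.Pairwise (· ≥ ·)) (hd : ∀ x ∈ l, d ≤ x) (j : ℕ) :
    l.getD (j + 1) d ≤ l.getD j d := by
  rcases lt_or_ge (j + 1) l.length with hj | hj
  · rw [getD_eq_getElem _ _ hj, getD_eq_getElem _ _ (by omega)]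
    exact hl.sortedGE.getElem_ge_getElem_of_le (by omega)
  · rw [getD_eq_default _ _ hj]
    rcases lt_or_ge j l.length with hj' | hj'
    · rw [getD_eq_getElem _ _ hj']
      exact hd _ (getElem_mem hj')
    · rw [getD_eq_default _ _ hj']

theorem Pairwise.getD_le_getD_orderedInsert (hl : l.Pairwise (· ≥ ·)) (hd : ∀ x ∈ l, d ≤ x)
    {a : α} (ha : d ≤ a) (j : ℕ) : l.getD j d ≤ (l.orderedInsert (· ≥ ·) a).getD j d := by
  induction l generalizing j with
  | nil => cases j <;> simp [ha]
  | cons b t ih =>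
    by_cases hab : a ≥ b
    · rw [orderedInsert_cons_of_le _ _ hab]
      cases j with
      | zero => exact hab
      | succ j => exact hl.getD_succ_le hd j
    · rw [orderedInsert_of_not_le _ _ hab]
      cases j with
      | zero => rfl
      | succ j => exact ih hl.of_cons (fun x hx => hd x (mem_cons_of_mem b hx)) j

end List

namespace Multiset

variable {α : Type*} [LinearOrder α]

theorem reverse_sort_le_eq_sort_ge (s : Multiset α) : (s.sort (· ≤ ·)).reverse = s.sort (· ≥ ·) :=
  (List.Perm.eq_of_pairwise' ((List.pairwise_reverse).2 (s.pairwise_sort _)) (s.pairwise_sort _)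
    (by rw [← coe_eq_coe, coe_reverse, sort_eq, sort_eq]))

theorem sort_ge_cons_eq_orderedInsert (a : α) (s : Multiset α) :
    (a ::ₘ s).sort (· ≥ ·) = (s.sort (· ≥ ·)).orderedInsert (· ≥ ·) a :=
  List.Perm.eq_of_pairwise' ((a ::ₘ s).pairwise_sort _) ((s.pairwise_sort _).orderedInsert _ _)
    (by rw [← coe_eq_coe, sort_eq, coe_eq_coe.2 (List.perm_orderedInsert _ _ _), ← cons_coe,
      sort_eq])

end Multiset

theorem owa_mono_add_item_general {K : ℕ} (α : Fin K → ℝ)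
    (hα0 : ∀ i, 0 ≤ α i)
    (vals : Multiset ℝ)
    (hvals : ∀ w ∈ vals, (0:ℝ) ≤ w) (v : ℝ) (hv : 0 ≤ v) :
    owaVal K α vals ≤ owaVal K α (v ::ₘ vals) := by
  unfold owaVal
  rw [Multiset.reverse_sort_le_eq_sort_ge, Multiset.reverse_sort_le_eq_sort_ge,
    Multiset.sort_ge_cons_eq_orderedInsert]
  gcongr with j
  · exact hα0 j
  · exact (vals.pairwise_sort _).getD_le_getD_orderedInsert
      (fun x hx => hvals x ((Multiset.mem_sort _).1 hx)) hv j

/-- For nonnegative non-increasing α, the OWA value is monotone under adding a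
nonnegative-utility item. -/
theorem owa_mono_add_item {K : ℕ} (α : Fin K → ℝ)
    (hα0 : ∀ i, 0 ≤ α i) (hαdec : Antitone α)
    (vals : Multiset ℝ) (hcard : Multiset.card vals < K)
    (hvals : ∀ w ∈ vals, (0:ℝ) ≤ w) (v : ℝ) (hv : 0 ≤ v) :
    owaVal K α vals ≤ owaVal K α (v ::ₘ vals) :=
  owa_mono_add_item_general α hα0 vals hvals v hv
end

section
/- There exists an instance of the capacitated assignment problem in which the sets of utilitarian-maximal, egalitarian-maximal, and Σ-OWA-maximal (with α = (1, 1/2)) assignments are pairwise disjoint. Concretely: with 4 agents, 4 objects, every agent assigned exactly 2 objects and every object assigned to exactly 2 agents, and the utility matrix u(a_1) = (11,9,0,0), u(a_2) = (8,8,2,2), u(a_3) = (7,7,3,3), u(a_4) = (6,6,4,4) over objects (o_1,o_2,o_3,o_4), no assignment is maximal for more than one of the three objectives. -/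
def theU : Fin 4 → Fin 4 → ℝ := ![![11,9,0,0], ![8,8,2,2], ![7,7,3,3], ![6,6,4,4]]

def FeasibleI (A : Fin 4 → Finset (Fin 4)) : Prop :=
  (∀ a, (A a).card = 2) ∧ ∀ o : Fin 4, (Finset.univ.filter (fun a => o ∈ A a)).card = 2

noncomputable def utilI (A : Fin 4 → Finset (Fin 4)) : ℝ := ∑ a, ∑ o ∈ A a, theU a o

noncomputable def egalI (A : Fin 4 → Finset (Fin 4)) : ℝ :=
  Finset.univ.inf' Finset.univ_nonempty (fun a => ∑ o ∈ A a, theU a o)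

noncomputable def owaI (A : Fin 4 → Finset (Fin 4)) : ℝ :=
  ∑ a, owaVal 2 ![1, 1/2] ((A a).val.map (theU a))

/-! In this instance objects `o₁, o₂` are worth much more than `o₃, o₄` to every agent. The
utilitarian optimum (value 50) is unique: agents 1 and 2 share `o₁, o₂`, agents 3 and 4 share
`o₃, o₄`. It leaves agent 3 with 6, below the egalitarian optimum 10, and its Σ-OWA value 38 is
below the 39 reached by giving agents 1–4 the bundles `o₁o₂, o₁o₃, o₂o₄, o₃o₄`. An egalitarian
value of at least 10 forces every agent to receive exactly one of `o₁, o₂` (agent 1 receiving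
`o₁`), which pins the Σ-OWA value at 36.5 < 39. All objectives take natural values (Σ-OWA after
doubling), so these facts reduce to a finite check over the `6 ^ 4` ways of giving each agent two
objects. Agents and objects are indexed from 0 in `Fin 4`. -/

lemma owaVal_pair_of_le (α : Fin 2 → ℝ) {x y : ℝ} (h : x ≤ y) :
    owaVal 2 α {x, y} = α 0 * y + α 1 * x := by
  rw [owaVal, Multiset.insert_eq_cons, Multiset.sort_cons _ _ _ (by simpa),
    Multiset.sort_singleton]
  simp [Fin.sum_univ_two]

lemma owaVal_pair (α : Fin 2 → ℝ) (x y : ℝ) :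
    owaVal 2 α {x, y} = α 0 * max x y + α 1 * min x y := by
  rcases le_total x y with h | h
  · rw [owaVal_pair_of_le α h, max_eq_right h, min_eq_left h]
  · rw [Multiset.pair_comm, owaVal_pair_of_le α h, max_eq_left h, min_eq_right h]

lemma owaVal_map_of_card_eq_two {ι : Type*} [DecidableEq ι] {s : Finset ι} (hs : s.card = 2)
    (f : ι → ℕ) :
    owaVal 2 ![1, 1/2] (s.val.map fun i => (f i : ℝ)) =
      ((∑ i ∈ s, f i + s.sup f : ℕ) : ℝ) / 2 := by
  obtain ⟨i, j, hij, rfl⟩ := Finset.card_eq_two.mp hs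
  have hval : ({i, j} : Finset ι).val.map (fun i => (f i : ℝ)) = {(f i : ℝ), (f j : ℝ)} := by
    simp [Finset.insert_val_of_notMem (Finset.notMem_singleton.mpr hij)]
  rw [hval, owaVal_pair, Finset.sum_pair hij]
  simp only [Matrix.cons_val_zero, Matrix.cons_val_one, Matrix.cons_val_fin_one, Finset.sup_insert,
    Finset.sup_singleton, Nat.cast_add, Nat.cast_max]
  linarith [min_add_max (f i : ℝ) (f j)]

def uNat : Fin 4 → Fin 4 → ℕ := ![![11,9,0,0], ![8,8,2,2], ![7,7,3,3], ![6,6,4,4]]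

lemma theU_eq_cast (a o : Fin 4) : theU a o = uNat a o := by
  fin_cases a <;> fin_cases o <;> norm_num [theU, uNat]

def bundleNat (A : Fin 4 → Finset (Fin 4)) (a : Fin 4) : ℕ := ∑ o ∈ A a, uNat a o

def utilNat (A : Fin 4 → Finset (Fin 4)) : ℕ := ∑ a, bundleNat A a

def egalNat (A : Fin 4 → Finset (Fin 4)) : ℕ :=
  Finset.univ.inf' Finset.univ_nonempty (bundleNat A)

/-- Twice the Σ-OWA value, using `2 * (max x y + min x y / 2) = x + y + max x y`. -/
def owaNat (A : Fin 4 → Finset (Fin 4)) : ℕ := ∑ a, (bundleNat A a + (A a).sup (uNat a))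

lemma utilI_eq_cast (A : Fin 4 → Finset (Fin 4)) : utilI A = utilNat A := by
  simp [utilI, utilNat, bundleNat, theU_eq_cast]

lemma egalI_eq_cast (A : Fin 4 → Finset (Fin 4)) : egalI A = egalNat A := by
  simp [egalI, egalNat, bundleNat, theU_eq_cast]

lemma owaI_eq_cast_div_two {A : Fin 4 → Finset (Fin 4)} (hA : ∀ a, (A a).card = 2) :
    owaI A = owaNat A / 2 := by
  rw [owaI, owaNat, Nat.cast_sum, Finset.sum_div]
  refine Finset.sum_congr rfl fun a _ => ?_
  simpa only [theU_eq_cast, bundleNat] using owaVal_map_of_card_eq_two (hA a) (uNat a)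

instance : DecidablePred FeasibleI := fun _ => inferInstanceAs (Decidable (_ ∧ _))

def twoSets : Fin 6 → Finset (Fin 4) := ![{0,1}, {0,2}, {0,3}, {1,2}, {1,3}, {2,3}]

lemma exists_twoSets_eq_of_card_eq_two :
    ∀ s : Finset (Fin 4), s.card = 2 → ∃ k, twoSets k = s := by
  decide

lemma FeasibleI.induction_on_twoSets {P : (Fin 4 → Finset (Fin 4)) → Prop}
    {A : Fin 4 → Finset (Fin 4)} (hA : FeasibleI A)
    (h : ∀ k : Fin 4 → Fin 6, FeasibleI (twoSets ∘ k) → P (twoSets ∘ k)) : P A := by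
  choose k hk using fun a => exists_twoSets_eq_of_card_eq_two (A a) (hA.1 a)
  obtain rfl : twoSets ∘ k = A := funext hk
  exact h k hA

def utilOpt : Fin 4 → Finset (Fin 4) := ![{0,1}, {0,1}, {2,3}, {2,3}]
def egalOpt : Fin 4 → Finset (Fin 4) := ![{0,2}, {0,2}, {1,3}, {1,3}]
def owaOpt : Fin 4 → Finset (Fin 4) := ![{0,1}, {0,2}, {1,3}, {2,3}]

lemma feasibleI_utilOpt : FeasibleI utilOpt := by decide
lemma feasibleI_egalOpt : FeasibleI egalOpt := by decide
lemma feasibleI_owaOpt : FeasibleI owaOpt := by decide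
lemma utilNat_utilOpt : utilNat utilOpt = 50 := by decide
lemma egalNat_utilOpt : egalNat utilOpt = 6 := by decide
lemma owaNat_utilOpt : owaNat utilOpt = 76 := by decide
lemma egalNat_egalOpt : egalNat egalOpt = 10 := by decide
lemma owaNat_owaOpt : owaNat owaOpt = 78 := by decide

set_option maxRecDepth 20000 in
lemma eq_utilOpt_of_le_utilNat {A : Fin 4 → Finset (Fin 4)} (hA : FeasibleI A)
    (h : 50 ≤ utilNat A) : A = utilOpt :=
  hA.induction_on_twoSets (P := fun A => 50 ≤ utilNat A → A = utilOpt) (by decide) h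

set_option maxRecDepth 20000 in
lemma owaNat_eq_of_le_egalNat {A : Fin 4 → Finset (Fin 4)} (hA : FeasibleI A)
    (h : 10 ≤ egalNat A) : owaNat A = 73 :=
  hA.induction_on_twoSets (P := fun A => 10 ≤ egalNat A → owaNat A = 73) (by decide) h

/-- In this instance, no feasible assignment is maximal for more than one of the
utilitarian, egalitarian and Σ-OWA (α = (1,1/2)) objectives. -/
theorem objectives_pairwise_disjoint :
    ∀ A, FeasibleI A →
      (¬ ((∀ B, FeasibleI B → utilI B ≤ utilI A) ∧ (∀ B, FeasibleI B → egalI B ≤ egalI A)) ∧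
       ¬ ((∀ B, FeasibleI B → utilI B ≤ utilI A) ∧ (∀ B, FeasibleI B → owaI B ≤ owaI A)) ∧
       ¬ ((∀ B, FeasibleI B → egalI B ≤ egalI A) ∧ (∀ B, FeasibleI B → owaI B ≤ owaI A))) := by
  intro A hA
  have util_max : (∀ B, FeasibleI B → utilI B ≤ utilI A) → A = utilOpt := fun h =>
    eq_utilOpt_of_le_utilNat hA <| by
      simpa [utilI_eq_cast, utilNat_utilOpt] using h utilOpt feasibleI_utilOpt
  have egal_max : (∀ B, FeasibleI B → egalI B ≤ egalI A) → 10 ≤ egalNat A := fun h => by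
    simpa [egalI_eq_cast, egalNat_egalOpt] using h egalOpt feasibleI_egalOpt
  have owa_max : (∀ B, FeasibleI B → owaI B ≤ owaI A) → 78 ≤ owaNat A := fun h => by
    have := h owaOpt feasibleI_owaOpt
    rw [owaI_eq_cast_div_two feasibleI_owaOpt.1, owaI_eq_cast_div_two hA.1, owaNat_owaOpt,
      div_le_div_iff_of_pos_right two_pos] at this
    exact_mod_cast this
  refine ⟨fun ⟨hu, he⟩ => ?_, fun ⟨hu, hw⟩ => ?_, fun ⟨he, hw⟩ => ?_⟩
  · simpa [util_max hu, egalNat_utilOpt] using egal_max he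
  · simpa [util_max hu, owaNat_utilOpt] using owa_max hw
  · simpa [owaNat_eq_of_le_egalNat hA (egal_max he)] using owa_max hw
end
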